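/- arXiv:1507.05567 — 2 statements merged into one kernel-verified Lean document; each statement's English description precedes it below -/
import Mathlib

section
/- Let T > 0, let f : ℝ → ℝ be a continuous T-periodic function with ∫₀ᵀ f(t) dt ≠ 0, and let α ∈ (0,1). If ∫₀ᵀ f(t) dt > 0 then I^α f(t) → +∞ as t → +∞, and if ∫₀ᵀ f(t) dt < 0 then I^α f(t) → −∞ as t → +∞. -/
open MeasureTheory intervalIntegral Filter Set

/-!
Write `f = m / T + h` with `m = ∫₀ᵀ f`, so that `h` has mean zero and hence a bounded periodic
primitive `H`. The constant part contributes exactly `m t^α / (T α Γ(α))`, while the part of `h`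
stays bounded: on `[t - T, t]` the kernel `(t - s)^(α - 1)` has integral `T^α / α`, and on
`[0, t - T]` the kernel is smooth and increasing, so integrating by parts against `H` costs at most
`2 sup |H| T^(α - 1)`. Negative mean reduces to positive mean via `-f`.
-/

theorem Function.Periodic.exists_abs_le_of_continuous {f : ℝ → ℝ} {T : ℝ}
    (hper : Function.Periodic f T) (hT : T ≠ 0) (hf : Continuous f) :
    ∃ C, ∀ x, |f x| ≤ C := by
  obtain ⟨C, hC⟩ := (hper.isBounded_of_continuous hT hf).exists_norm_le
  exact ⟨C, fun x => hC _ (mem_range_self x)⟩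

theorem Function.Periodic.periodic_primitive_of_integral_eq_zero {h : ℝ → ℝ} {T : ℝ}
    (hper : Function.Periodic h T) (hh : Continuous h) (h0 : ∫ x in 0..T, h x = 0) :
    Function.Periodic (fun t => ∫ x in 0..t, h x) T := fun t => by
  simp only [hper.intervalIntegral_add_eq_add 0 t (fun _ _ => hh.intervalIntegrable _ _),
    zero_add, h0, add_zero]

theorem intervalIntegrable_sub_rpow (t : ℝ) {r : ℝ} (hr : -1 < r) (a b : ℝ) :
    IntervalIntegrable (fun s => (t - s) ^ r) volume a b := by
  simpa using ((intervalIntegrable_rpow' hr (a := t - b) (b := t - a)).comp_sub_left t).symm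

theorem integral_sub_rpow_sub_one {α : ℝ} (hα : 0 < α) (a t : ℝ) :
    ∫ s in a..t, (t - s) ^ (α - 1) = (t - a) ^ α / α := by
  rw [integral_comp_sub_left (fun x => x ^ (α - 1)), sub_self,
    integral_rpow (Or.inl (by linarith)), sub_add_cancel, Real.zero_rpow hα.ne', sub_zero]

theorem hasDerivAt_sub_rpow {t x : ℝ} (r : ℝ) (hx : x < t) :
    HasDerivAt (fun s => (t - s) ^ r) (-(r * (t - x) ^ (r - 1))) x := by
  simpa using ((hasDerivAt_id x).const_sub t).rpow_const (p := r) (Or.inl (by simp; linarith))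

theorem abs_integral_mul_deriv_le {k k' H h : ℝ → ℝ} {a b M : ℝ} (hab : a ≤ b)
    (hk : ContinuousOn k (Icc a b)) (hkk' : ∀ x ∈ Ioo a b, HasDerivAt k (k' x) x)
    (hk' : IntervalIntegrable k' volume a b) (hk'_nonneg : ∀ x ∈ Icc a b, 0 ≤ k' x)
    (hka : 0 ≤ k a) (hHh : ∀ x, HasDerivAt H (h x) x) (hh : IntervalIntegrable h volume a b)
    (hM : ∀ x, |H x| ≤ M) :
    |∫ x in a..b, k x * h x| ≤ 2 * M * k b := by
  have hibp := integral_mul_deriv_eq_deriv_mul_of_hasDerivAt (v := H) (by rwa [uIcc_of_le hab])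
    (fun x _ => (hHh x).continuousAt.continuousWithinAt)
    (by rwa [min_eq_left hab, max_eq_right hab]) (fun x _ => hHh x) hk' hh
  have hk_sub : ∫ x in a..b, k' x = k b - k a :=
    integral_eq_sub_of_hasDerivAt_of_le hab hk hkk' hk'
  have hkb : k a ≤ k b := by
    rw [← sub_nonneg, ← hk_sub]
    exact integral_nonneg hab hk'_nonneg
  have hrem : |∫ x in a..b, k' x * H x| ≤ (k b - k a) * M := by
    rw [← hk_sub, ← intervalIntegral.integral_mul_const]
    refine (Real.norm_eq_abs _).symm.trans_le <|
      norm_integral_le_of_norm_le hab (ae_of_all _ fun x hx => ?_) (hk'.mul_const M)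
    rw [Real.norm_eq_abs, abs_mul, abs_of_nonneg (hk'_nonneg x (Ioc_subset_Icc_self hx))]
    exact mul_le_mul_of_nonneg_left (hM x) (hk'_nonneg x (Ioc_subset_Icc_self hx))
  have hbdry : ∀ x, 0 ≤ k x → |k x * H x| ≤ k x * M := fun x hx => by
    rw [abs_mul, abs_of_nonneg hx]
    exact mul_le_mul_of_nonneg_left (hM x) hx
  calc |∫ x in a..b, k x * h x|
      ≤ |k b * H b| + |k a * H a| + |∫ x in a..b, k' x * H x| := by
        rw [hibp]
        exact (abs_sub _ _).trans (add_le_add_left (abs_sub _ _) _)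
    _ ≤ k b * M + k a * M + (k b - k a) * M := by
        gcongr
        exacts [hbdry b (hka.trans hkb), hbdry a hka]
    _ = 2 * M * k b := by ring

theorem abs_integral_sub_rpow_mul_le {h : ℝ → ℝ} {a t α C : ℝ} (hα : 0 < α)
    (hat : a ≤ t) (hC : ∀ x, |h x| ≤ C) :
    |∫ s in a..t, (t - s) ^ (α - 1) * h s| ≤ C * ((t - a) ^ α / α) := by
  rw [← integral_sub_rpow_sub_one hα, ← intervalIntegral.integral_const_mul]
  refine (Real.norm_eq_abs _).symm.trans_le <|
    norm_integral_le_of_norm_le hat (ae_of_all _ fun x hx => ?_)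
      ((intervalIntegrable_sub_rpow t (by linarith) a t).const_mul C)
  have hk : 0 ≤ (t - x) ^ (α - 1) := Real.rpow_nonneg (by linarith [hx.2]) _
  rw [Real.norm_eq_abs, abs_mul, abs_of_nonneg hk, mul_comm C]
  exact mul_le_mul_of_nonneg_left (hC x) hk

theorem abs_integral_sub_rpow_mul_deriv_le {H h : ℝ → ℝ} {a b t α M : ℝ} (hα : α < 1)
    (hab : a ≤ b) (hbt : b < t) (hHh : ∀ x, HasDerivAt H (h x) x)
    (hh : IntervalIntegrable h volume a b) (hM : ∀ x, |H x| ≤ M) :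
    |∫ s in a..b, (t - s) ^ (α - 1) * h s| ≤ 2 * M * (t - b) ^ (α - 1) := by
  have hderiv : ∀ x ∈ Icc a b, HasDerivAt (fun s => (t - s) ^ (α - 1))
      (-((α - 1) * (t - x) ^ (α - 1 - 1))) x := fun x hx =>
    hasDerivAt_sub_rpow _ (hx.2.trans_lt hbt)
  refine abs_integral_mul_deriv_le hab
    (fun x hx => (hderiv x hx).continuousAt.continuousWithinAt)
    (fun x hx => hderiv x (Ioo_subset_Icc_self hx)) ?_ (fun x hx => ?_)
    (Real.rpow_nonneg (by linarith) _) hHh hh hM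
  · refine ContinuousOn.intervalIntegrable ?_
    rw [uIcc_of_le hab]
    refine (ContinuousOn.rpow_const (by fun_prop) fun x hx => ?_).const_smul (α - 1) |>.neg
    exact Or.inl (by linarith [hx.2])
  · exact neg_nonneg.2 (mul_nonpos_of_nonpos_of_nonneg (by linarith)
      (Real.rpow_nonneg (by linarith [hx.2]) _))

theorem Function.Periodic.exists_abs_integral_sub_rpow_mul_le {h : ℝ → ℝ} {T α : ℝ}
    (hper : Function.Periodic h T) (hT : 0 < T) (hh : Continuous h)
    (h0 : ∫ x in 0..T, h x = 0) (hα : α ∈ Ioo 0 1) :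
    ∃ B, ∀ t, T ≤ t → |∫ s in 0..t, (t - s) ^ (α - 1) * h s| ≤ B := by
  obtain ⟨M, hM⟩ :=
    (hper.periodic_primitive_of_integral_eq_zero hh h0).exists_abs_le_of_continuous hT.ne'
      (continuous_primitive (fun _ _ => hh.intervalIntegrable _ _) 0)
  obtain ⟨C, hC⟩ := hper.exists_abs_le_of_continuous hT.ne' hh
  refine ⟨2 * M * T ^ (α - 1) + C * (T ^ α / α), fun t ht => ?_⟩
  -- Split at `t - T`: integration by parts away from the singularity of the kernel at `s = t`.
  have hint : ∀ a b, IntervalIntegrable (fun s => (t - s) ^ (α - 1) * h s) volume a b :=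
    fun a b => (intervalIntegrable_sub_rpow t (by linarith [hα.1]) a b).mul_continuousOn
      hh.continuousOn
  have hhead := abs_integral_sub_rpow_mul_deriv_le hα.2 (by linarith : 0 ≤ t - T)
    (by linarith : t - T < t) (fun x => (hh.integral_hasStrictDerivAt 0 x).hasDerivAt)
    (hh.intervalIntegrable _ _) hM
  have htail := abs_integral_sub_rpow_mul_le hα.1 (by linarith : t - T ≤ t) hC
  rw [sub_sub_cancel] at hhead htail
  rw [← integral_add_adjacent_intervals (hint 0 (t - T)) (hint (t - T) t)]
  exact (abs_add_le _ _).trans (add_le_add hhead htail)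

theorem Function.Periodic.exists_abs_integral_sub_rpow_mul_sub_le {f : ℝ → ℝ} {T α : ℝ}
    (hper : Function.Periodic f T) (hT : 0 < T) (hf : Continuous f) (hα : α ∈ Ioo 0 1) :
    ∃ B, ∀ t, T ≤ t → |(∫ s in 0..t, (t - s) ^ (α - 1) * f s) -
      (∫ x in 0..T, f x) / (T * α) * t ^ α| ≤ B := by
  set m := ∫ x in 0..T, f x
  have hper' : Function.Periodic (fun x => f x - m / T) T := fun x => by simp [hper x]
  have h0 : ∫ x in 0..T, (f x - m / T) = 0 := by
    simp [integral_sub (hf.intervalIntegrable 0 T) intervalIntegrable_const, m, hT.ne']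
  obtain ⟨B, hB⟩ :=
    hper'.exists_abs_integral_sub_rpow_mul_le hT (hf.sub continuous_const) h0 hα
  refine ⟨B, fun t ht => ?_⟩
  have hsplit : ∫ s in 0..t, (t - s) ^ (α - 1) * f s =
      (∫ s in 0..t, (t - s) ^ (α - 1) * (f s - m / T)) + m / (T * α) * t ^ α := by
    have hk := intervalIntegrable_sub_rpow t (by linarith [hα.1] : -1 < α - 1) 0 t
    simp_rw [mul_sub]
    rw [integral_sub (hk.mul_continuousOn hf.continuousOn) (hk.mul_const _),
      intervalIntegral.integral_mul_const, integral_sub_rpow_sub_one hα.1, sub_zero]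
    field_simp
    ring
  rw [hsplit, add_sub_cancel_right]
  exact hB t ht

noncomputable def rlIntegral (α : ℝ) (f : ℝ → ℝ) (t : ℝ) : ℝ :=
  1 / Real.Gamma α * ∫ s in (0 : ℝ)..t, (t - s) ^ (α - 1) * f s

theorem rlIntegral_neg (α : ℝ) (f : ℝ → ℝ) : rlIntegral α (-f) = -rlIntegral α f := by
  ext t
  simp [rlIntegral]

theorem Function.Periodic.tendsto_rlIntegral_atTop {f : ℝ → ℝ} {T α : ℝ}
    (hper : Function.Periodic f T) (hT : 0 < T) (hf : Continuous f) (hα : α ∈ Ioo 0 1)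
    (hpos : 0 < ∫ x in 0..T, f x) :
    Tendsto (rlIntegral α f) atTop atTop := by
  obtain ⟨B, hB⟩ := hper.exists_abs_integral_sub_rpow_mul_sub_le hT hf hα
  have hΓ : 0 < 1 / Real.Gamma α := one_div_pos.2 (Real.Gamma_pos_of_pos hα.1)
  have hlower : Tendsto (fun t => 1 / Real.Gamma α *
      ((∫ x in 0..T, f x) / (T * α) * t ^ α - B)) atTop atTop :=
    (((tendsto_rpow_atTop hα.1).const_mul_atTop (div_pos hpos (mul_pos hT hα.1))).atTop_add
      tendsto_const_nhds).const_mul_atTop hΓ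
  refine tendsto_atTop_mono' _ ?_ hlower
  filter_upwards [eventually_ge_atTop T] with t ht
  exact mul_le_mul_of_nonneg_left (by linarith [(abs_le.1 (hB t ht)).1]) hΓ.le

theorem rl_integral_diverges_of_nonzero_mean_general (T : ℝ) (hT : 0 < T)
    (f : ℝ → ℝ) (hf : Continuous f) (hper : Function.Periodic f T)
    (α : ℝ) (hα : α ∈ Set.Ioo (0 : ℝ) 1) :
    ((0 : ℝ) < (∫ t in (0 : ℝ)..T, f t) →
      Tendsto (fun t : ℝ =>
          (1 / Real.Gamma α) * ∫ s in (0 : ℝ)..t, (t - s) ^ (α - 1) * f s)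
        atTop atTop) ∧
    ((∫ t in (0 : ℝ)..T, f t) < 0 →
      Tendsto (fun t : ℝ =>
          (1 / Real.Gamma α) * ∫ s in (0 : ℝ)..t, (t - s) ^ (α - 1) * f s)
        atTop atBot) := by
  refine ⟨hper.tendsto_rlIntegral_atTop hT hf hα, fun hneg => ?_⟩
  have hneg_f := Function.Periodic.tendsto_rlIntegral_atTop (f := -f) (hper.comp Neg.neg) hT
    hf.neg hα (by simpa using hneg)
  rw [rlIntegral_neg] at hneg_f
  exact tendsto_neg_atTop_iff.mp hneg_f

/-- For a continuous `T`-periodic `f` with nonzero mean and `α ∈ (0,1)`, the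
fractional integral `I^α f (t)` tends to `+∞` if `∫₀ᵀ f > 0` and to `-∞` if
`∫₀ᵀ f < 0`, as `t → +∞`. -/
theorem rl_integral_diverges_of_nonzero_mean (T : ℝ) (hT : 0 < T)
    (f : ℝ → ℝ) (hf : Continuous f) (hper : Function.Periodic f T)
    (hne : (∫ t in (0 : ℝ)..T, f t) ≠ 0)
    (α : ℝ) (hα : α ∈ Set.Ioo (0 : ℝ) 1) :
    ((0 : ℝ) < (∫ t in (0 : ℝ)..T, f t) →
      Tendsto (fun t : ℝ =>
          (1 / Real.Gamma α) * ∫ s in (0 : ℝ)..t, (t - s) ^ (α - 1) * f s)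
        atTop atTop) ∧
    ((∫ t in (0 : ℝ)..T, f t) < 0 →
      Tendsto (fun t : ℝ =>
          (1 / Real.Gamma α) * ∫ s in (0 : ℝ)..t, (t - s) ^ (α - 1) * f s)
        atTop atBot) :=
  rl_integral_diverges_of_nonzero_mean_general T hT f hf hper α hα
end

section
/- Let T > 0, let f : ℝ → ℝ be a continuous T-periodic function that is not identically zero, and let α ∈ (0,1). If the function t ↦ I^α f(t) is bounded on (0,∞), then no almost periodic function (in the sense of Bohr) g : ℝ → ℝ agrees with I^α f on (0,∞); that is, I^α f is not the restriction to (0,∞) of an almost periodic function. -/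
/-
If `g` is almost periodic and `g (u + T) - g u → 0` as `u → ∞`, then `g` is `T`-periodic: an
almost period `ξ` moves any `t` far to the right without changing `g` much. For `g = I^α f`
with `f` `T`-periodic, `g (t + T) - g t = Γ(α)⁻¹ ∫₀ᵀ (t + T - s) ^ (α - 1) f s ds`, which is
`O(t ^ (α - 1))`, so `g` would be `T`-periodic and hence `∫₀ᵀ (x - s) ^ (α - 1) f s ds = 0` for
all `x > T`. Substituting `x = 1 / y` and differentiating `k` times in `y` at `y = 0` (the
factors `k + 1 - α` never vanish) shows that all moments of `f` on `[0, T]` vanish, so `f = 0`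
by Weierstrass approximation.
-/

open MeasureTheory intervalIntegral Set

def AlmostPeriodic (g : ℝ → ℝ) : Prop :=
  Continuous g ∧
    ∀ ε : ℝ, 0 < ε → ∃ l : ℝ, 0 < l ∧ ∀ a : ℝ,
      ∃ ξ ∈ Icc a (a + l), ∀ t : ℝ, |g (t + ξ) - g t| < ε

open Filter Topology
open scoped Interval

theorem AlmostPeriodic.periodic_of_tendsto_sub {g : ℝ → ℝ} {T : ℝ} (hg : AlmostPeriodic g)
    (hlim : Tendsto (fun u => g (u + T) - g u) atTop (𝓝 0)) : Function.Periodic g T := by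
  intro t
  refine eq_of_forall_dist_le fun ε hε => ?_
  obtain ⟨l, -, hl⟩ := hg.2 (ε / 3) (by positivity)
  obtain ⟨A, hA⟩ := Metric.tendsto_atTop.1 hlim (ε / 3) (by positivity)
  obtain ⟨ξ, hξ, hξt⟩ := hl (A - t)
  -- compare `t` and `t + T` through `t + ξ` and `t + ξ + T`, which lie where `hlim` applies
  have h₁ := abs_lt.1 (hξt (t + T))
  have h₂ := abs_lt.1 (hξt t)
  have h₃ := abs_lt.1 (by simpa using hA (t + ξ) (by linarith [hξ.1]))
  rw [add_right_comm] at h₁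
  rw [Real.dist_eq, abs_le]
  constructor <;> linarith [h₁.1, h₁.2, h₂.1, h₂.2, h₃.1, h₃.2]

section

variable {f : ℝ → ℝ} {T r : ℝ}

theorem intervalIntegrable_sub_rpow_mul (hr : -1 < r) (hf : Continuous f) (c a b : ℝ) :
    IntervalIntegrable (fun s => (c - s) ^ r * f s) volume a b := by
  have := (intervalIntegrable_rpow' (a := c - a) (b := c - b) hr).comp_sub_left c
  exact (by simpa using this : IntervalIntegrable (fun s => (c - s) ^ r) volume a b)
    |>.mul_continuousOn hf.continuousOn

theorem integral_sub_rpow_mul_add_period (hf : Continuous f) (hper : Function.Periodic f T)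
    (hr : -1 < r) (t : ℝ) :
    ∫ s in 0..t + T, (t + T - s) ^ r * f s =
      (∫ s in 0..T, (t + T - s) ^ r * f s) + ∫ s in 0..t, (t - s) ^ r * f s := by
  rw [← integral_add_adjacent_intervals (intervalIntegrable_sub_rpow_mul hr hf _ _ _)
    (intervalIntegrable_sub_rpow_mul hr hf _ _ _ : IntervalIntegrable _ _ T (t + T))]
  congr 1
  simpa [hper _] using
    (integral_comp_add_right (fun s => (t + T - s) ^ r * f s) T (a := 0) (b := t)).symm

theorem tendsto_integral_sub_rpow_mul_atTop (hT : 0 ≤ T) (hf : Continuous f) (hr : r < 0) :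
    Tendsto (fun x => ∫ s in 0..T, (x - s) ^ r * f s) atTop (𝓝 0) := by
  obtain ⟨B, hB⟩ := isCompact_Icc.exists_bound_of_continuousOn (s := Icc 0 T) hf.continuousOn
  have hbound : ∀ᶠ x in atTop, ‖∫ s in 0..T, (x - s) ^ r * f s‖ ≤ (x - T) ^ r * B * |T - 0| := by
    filter_upwards [eventually_gt_atTop T] with x hx
    refine intervalIntegral.norm_integral_le_of_norm_le_const fun s hs => ?_
    rw [uIoc_of_le hT] at hs
    rw [norm_mul, Real.norm_of_nonneg (Real.rpow_nonneg (by linarith [hs.2]) _)]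
    exact mul_le_mul (Real.rpow_le_rpow_of_nonpos (by linarith) (by linarith [hs.2]) hr.le)
      (hB s (Ioc_subset_Icc_self hs)) (norm_nonneg _) (by positivity)
  refine squeeze_zero_norm' hbound ?_
  have hpow : Tendsto (fun x : ℝ => (x - T) ^ r) atTop (𝓝 0) := by
    simpa [Function.comp_def, sub_eq_add_neg] using
      (tendsto_rpow_neg_atTop (neg_pos.2 hr)).comp
        (tendsto_atTop_add_const_right _ (-T) tendsto_id)
  simpa using (hpow.mul_const B).mul_const |T - 0|

theorem integral_eval_mul_eq_zero_of_integral_pow_mul_eq_zero (hf : Continuous f)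
    (hmom : ∀ k : ℕ, ∫ s in 0..T, s ^ k * f s = 0) (p : Polynomial ℝ) :
    ∫ s in 0..T, p.eval s * f s = 0 := by
  induction p using Polynomial.induction_on' with
  | add p q hp hq =>
    simp only [Polynomial.eval_add, add_mul]
    rw [intervalIntegral.integral_add
      ((by fun_prop : Continuous fun s => p.eval s * f s).intervalIntegrable _ _)
      ((by fun_prop : Continuous fun s => q.eval s * f s).intervalIntegrable _ _), hp, hq, add_zero]
  | monomial k c => simp [mul_assoc, hmom]

theorem eqOn_zero_of_integral_pow_mul_eq_zero (hT : 0 < T) (hf : Continuous f)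
    (hmom : ∀ k : ℕ, ∫ s in 0..T, s ^ k * f s = 0) : EqOn f 0 (Icc 0 T) := by
  obtain ⟨B, hB⟩ := isCompact_Icc.exists_bound_of_continuousOn (s := Icc 0 T) hf.continuousOn
  -- `∫ f ^ 2 = ∫ (f - p) * f` for every polynomial `p`, which is small by Weierstrass
  have hsq : ∫ s in 0..T, f s * f s = 0 := by
    refine eq_of_forall_dist_le fun ε hε => ?_
    obtain ⟨p, hp⟩ := exists_polynomial_near_of_continuousOn 0 T f hf.continuousOn
      (ε / ((|B| + 1) * T)) (by positivity)
    have hsub : ∫ s in 0..T, f s * f s = ∫ s in 0..T, (f s - p.eval s) * f s := by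
      simp only [sub_mul]
      rw [intervalIntegral.integral_sub
        ((by fun_prop : Continuous fun s => f s * f s).intervalIntegrable _ _)
        ((by fun_prop : Continuous fun s => p.eval s * f s).intervalIntegrable _ _),
        integral_eval_mul_eq_zero_of_integral_pow_mul_eq_zero hf hmom, sub_zero]
    rw [Real.dist_eq, sub_zero, hsub, ← Real.norm_eq_abs]
    calc ‖∫ s in 0..T, (f s - p.eval s) * f s‖
        ≤ ε / ((|B| + 1) * T) * (|B| + 1) * |T - 0| := by
          refine intervalIntegral.norm_integral_le_of_norm_le_const fun s hs => ?_
          have hs' := Ioc_subset_Icc_self ((uIoc_of_le hT.le) ▸ hs)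
          rw [norm_mul, Real.norm_eq_abs, abs_sub_comm]
          exact mul_le_mul (hp s hs').le ((hB s hs').trans (by linarith [le_abs_self B]))
            (norm_nonneg _) (by positivity)
      _ = ε := by rw [sub_zero, abs_of_pos hT]; field_simp
  intro x hx
  by_contra hfx
  have hpos := integral_lt_integral_of_continuousOn_of_le_of_exists_lt hT continuousOn_const
    (hf.mul hf).continuousOn (fun s _ => mul_self_nonneg (f s)) ⟨x, hx, mul_self_pos.2 hfx⟩
  simp [hsq] at hpos

/-- At `y = 0` this is the `k`-th moment of `f` on `[0, T]`, while
`weightedMoment f T r 0 y = y ^ r * ∫ s in 0..T, (y⁻¹ - s) ^ r * f s` for `y > 0`. -/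
noncomputable def weightedMoment (f : ℝ → ℝ) (T r : ℝ) (k : ℕ) (y : ℝ) : ℝ :=
  ∫ s in 0..T, s ^ k * (1 - y * s) ^ (r - k) * f s

theorem half_le_one_sub_mul (hT : 0 < T) {y s : ℝ} (hy : y ∈ Metric.ball 0 (2 * T)⁻¹)
    (hs : s ∈ Icc 0 T) : 1 / 2 ≤ 1 - y * s := by
  rw [mem_ball_zero_iff, Real.norm_eq_abs] at hy
  have hys : |y * s| ≤ |y| * T := by
    rw [abs_mul, abs_of_nonneg hs.1]
    exact mul_le_mul_of_nonneg_left hs.2 (abs_nonneg y)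
  have hyT : |y| * T ≤ 1 / 2 := by
    calc |y| * T ≤ (2 * T)⁻¹ * T := mul_le_mul_of_nonneg_right hy.le hT.le
      _ = 1 / 2 := by field_simp
  linarith [le_abs_self (y * s)]

theorem continuousOn_pow_mul_one_sub_mul_rpow_mul (hT : 0 < T) (hf : Continuous f) {y : ℝ}
    (hy : y ∈ Metric.ball 0 (2 * T)⁻¹) (k : ℕ) (e : ℝ) :
    ContinuousOn (fun s => s ^ k * (1 - y * s) ^ e * f s) (Icc 0 T) := by
  refine ((continuousOn_pow k).mul (ContinuousOn.rpow_const (by fun_prop) fun s hs => ?_)).mul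
    hf.continuousOn
  exact Or.inl (by linarith [half_le_one_sub_mul hT hy hs])

theorem hasDerivAt_weightedMoment (hT : 0 < T) (hf : Continuous f) (hr : r < 0) (k : ℕ)
    {y₀ : ℝ} (hy₀ : y₀ ∈ Metric.ball 0 (2 * T)⁻¹) :
    HasDerivAt (weightedMoment f T r k) ((k - r) * weightedMoment f T r (k + 1) y₀) y₀ := by
  obtain ⟨B, hB⟩ := isCompact_Icc.exists_bound_of_continuousOn (s := Icc 0 T) hf.continuousOn
  have hIoc : Ι 0 T ⊆ Icc 0 T := (uIoc_of_le hT.le).trans_subset Ioc_subset_Icc_self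
  have hball : Metric.ball (0 : ℝ) (2 * T)⁻¹ ∈ 𝓝 y₀ := Metric.isOpen_ball.mem_nhds hy₀
  have hF : ∀ y ∈ Metric.ball (0 : ℝ) (2 * T)⁻¹,
      ContinuousOn (fun s => s ^ k * (1 - y * s) ^ (r - k) * f s) (Icc 0 T) :=
    fun y hy => continuousOn_pow_mul_one_sub_mul_rpow_mul hT hf hy k _
  let F' : ℝ → ℝ → ℝ := fun y s => (k - r) * (s ^ (k + 1) * (1 - y * s) ^ (r - ↑(k + 1)) * f s)
  have hF'_bound : ∀ s ∈ Ι 0 T, ∀ y ∈ Metric.ball (0 : ℝ) (2 * T)⁻¹,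
      ‖F' y s‖ ≤ (k - r) * (T ^ (k + 1) * (1 / 2) ^ (r - ↑(k + 1)) * B) := by
    intro s hs y hy
    have hs' := hIoc hs
    have hbase := half_le_one_sub_mul hT hy hs'
    have hkr : 0 ≤ (k : ℝ) - r := by linarith [k.cast_nonneg (α := ℝ)]
    have he : r - ↑(k + 1) ≤ 0 := by push_cast; linarith [k.cast_nonneg (α := ℝ)]
    simp only [F', norm_mul, Real.norm_of_nonneg hkr, Real.norm_of_nonneg (pow_nonneg hs'.1 _),
      Real.norm_of_nonneg (Real.rpow_nonneg (by linarith : 0 ≤ 1 - y * s) _)]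
    refine mul_le_mul_of_nonneg_left (mul_le_mul (mul_le_mul (pow_le_pow_left₀ hs'.1 hs'.2 _)
      (Real.rpow_le_rpow_of_nonpos (by norm_num) hbase he) (Real.rpow_nonneg (by linarith) _)
      (by positivity)) (hB s hs') (norm_nonneg _) (by positivity)) hkr
  have hF_deriv : ∀ s ∈ Ι 0 T, ∀ y ∈ Metric.ball (0 : ℝ) (2 * T)⁻¹,
      HasDerivAt (fun y => s ^ k * (1 - y * s) ^ (r - k) * f s) (F' y s) y := by
    intro s hs y hy
    have hne : 1 - y * s ≠ 0 := by linarith [half_le_one_sub_mul hT hy (hIoc hs)]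
    refine ((((hasDerivAt_mul_const s).const_sub 1).rpow_const (p := r - k) (Or.inl hne))
      |>.const_mul (s ^ k) |>.mul_const (f s)).congr_deriv ?_
    simp only [F']
    rw [show r - ↑(k + 1) = r - k - 1 by push_cast; ring]
    ring
  have hF' : ContinuousOn (F' y₀) (Icc 0 T) :=
    (continuousOn_pow_mul_one_sub_mul_rpow_mul hT hf hy₀ (k + 1) _).const_smul (k - r)
  have key := hasDerivAt_integral_of_dominated_loc_of_deriv_le (μ := volume) (a := 0) (b := T)
    (F := fun y s => s ^ k * (1 - y * s) ^ (r - k) * f s) (F' := F') hball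
    (eventually_of_mem hball fun y hy =>
      ((hF y hy).mono hIoc).aestronglyMeasurable measurableSet_uIoc)
    ((hF y₀ hy₀).intervalIntegrable_of_Icc hT.le)
    ((hF'.mono hIoc).aestronglyMeasurable measurableSet_uIoc)
    (Eventually.of_forall hF'_bound) intervalIntegrable_const (Eventually.of_forall hF_deriv)
  rw [show ∫ s in 0..T, F' y₀ s = (k - r) * weightedMoment f T r (k + 1) y₀ from
    intervalIntegral.integral_const_mul _ _] at key
  exact key.2

theorem weightedMoment_eqOn_zero (hT : 0 < T) (hf : Continuous f) (hr : r < 0)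
    (hG : ∀ x > T, ∫ s in 0..T, (x - s) ^ r * f s = 0) (k : ℕ) :
    EqOn (weightedMoment f T r k) 0 (Ioo 0 (2 * T)⁻¹) := by
  induction k with
  | zero =>
    intro y hy
    have hTy : 2 * T < y⁻¹ := (lt_inv_comm₀ hy.1 (by positivity)).1 hy.2
    calc weightedMoment f T r 0 y = ∫ s in 0..T, y ^ r * ((y⁻¹ - s) ^ r * f s) :=
          integral_congr fun s hs => ?_
      _ = 0 := by rw [intervalIntegral.integral_const_mul, hG _ (by linarith), mul_zero]
    rw [uIcc_of_le hT.le] at hs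
    rw [← mul_assoc, ← Real.mul_rpow hy.1.le (by linarith [hs.2]), mul_sub,
      mul_inv_cancel₀ hy.1.ne']
    simp
  | succ k ih =>
    intro y hy
    have hy' : y ∈ Metric.ball 0 (2 * T)⁻¹ := by
      rw [mem_ball_zero_iff, Real.norm_of_nonneg hy.1.le]; exact hy.2
    have hderiv_zero : HasDerivAt (weightedMoment f T r k) 0 y :=
      (hasDerivAt_const y 0).congr_of_eventuallyEq (eventually_of_mem (isOpen_Ioo.mem_nhds hy) ih)
    have hkr : (k : ℝ) - r ≠ 0 := by linarith [k.cast_nonneg (α := ℝ)]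
    exact (mul_eq_zero.1 ((hasDerivAt_weightedMoment hT hf hr k hy').unique hderiv_zero))
      |>.resolve_left hkr

theorem integral_pow_mul_eq_zero_of_integral_sub_rpow_mul_eq_zero (hT : 0 < T)
    (hf : Continuous f) (hr : r < 0)
    (hG : ∀ x > T, ∫ s in 0..T, (x - s) ^ r * f s = 0) (k : ℕ) :
    ∫ s in 0..T, s ^ k * f s = 0 := by
  have hcont : ContinuousAt (weightedMoment f T r k) 0 :=
    (hasDerivAt_weightedMoment hT hf hr k (Metric.mem_ball_self (by positivity))).continuousAt
  have hlim : Tendsto (weightedMoment f T r k) (𝓝[>] 0) (𝓝 0) :=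
    tendsto_const_nhds.congr' (eventually_of_mem (Ioo_mem_nhdsGT (by positivity))
      fun y hy => (weightedMoment_eqOn_zero hT hf hr hG k hy).symm)
  simpa [weightedMoment] using
    tendsto_nhds_unique (hcont.tendsto.mono_left nhdsWithin_le_nhds) hlim

end

theorem rl_integral_not_almost_periodic_general (T : ℝ) (hT : 0 < T)
    (f : ℝ → ℝ) (hf : Continuous f) (hper : Function.Periodic f T) (hne : f ≠ 0)
    (α : ℝ) (hα : α ∈ Set.Ioo (0 : ℝ) 1)
    (Iαf : ℝ → ℝ)
    (hIαf : ∀ t : ℝ, Iαf t = (1 / Real.Gamma α) * ∫ s in (0 : ℝ)..t, (t - s) ^ (α - 1) * f s) :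
    ¬ ∃ g : ℝ → ℝ, AlmostPeriodic g ∧ ∀ t ∈ Ioi (0 : ℝ), g t = Iαf t := by
  rintro ⟨g, hg, hgI⟩
  have hr₁ : -1 < α - 1 := by linarith [hα.1]
  have hr₀ : α - 1 < 0 := by linarith [hα.2]
  have hincr : ∀ t > 0,
      g (t + T) - g t = 1 / Real.Gamma α * ∫ s in 0..T, (t + T - s) ^ (α - 1) * f s := by
    intro t ht
    rw [hgI t ht, hgI (t + T) (by rw [mem_Ioi]; linarith), hIαf, hIαf,
      integral_sub_rpow_mul_add_period hf hper hr₁]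
    ring
  have hgper : Function.Periodic g T := hg.periodic_of_tendsto_sub <| by
    have := ((tendsto_integral_sub_rpow_mul_atTop hT.le hf hr₀).comp
      (tendsto_atTop_add_const_right _ T tendsto_id)).const_mul (1 / Real.Gamma α)
    rw [mul_zero] at this
    exact this.congr' (eventually_of_mem (Ioi_mem_atTop 0) fun t ht => (hincr t ht).symm)
  have htail : ∀ x > T, ∫ s in 0..T, (x - s) ^ (α - 1) * f s = 0 := by
    intro x hx
    have := hincr (x - T) (by linarith)
    rw [sub_add_cancel, hgper.sub_eq, sub_self, eq_comm] at this
    exact (mul_eq_zero.1 this).resolve_left (one_div_ne_zero (Real.Gamma_pos_of_pos hα.1).ne')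
  refine hne (funext fun x => ?_)
  obtain ⟨y, hy, hxy⟩ := hper.exists_mem_Ico₀ hT x
  rw [hxy]
  exact eqOn_zero_of_integral_pow_mul_eq_zero hT hf
    (integral_pow_mul_eq_zero_of_integral_sub_rpow_mul_eq_zero hT hf hr₀ htail)
    (Ico_subset_Icc_self hy)

/-- If `f` is a nonzero continuous `T`-periodic function, `α ∈ (0,1)` and `I^α f` is
bounded on `(0,∞)`, then `I^α f` is not the restriction to `(0,∞)` of an almost
periodic function. -/
theorem rl_integral_not_almost_periodic (T : ℝ) (hT : 0 < T)
    (f : ℝ → ℝ) (hf : Continuous f) (hper : Function.Periodic f T) (hne : f ≠ 0)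
    (α : ℝ) (hα : α ∈ Set.Ioo (0 : ℝ) 1)
    (Iαf : ℝ → ℝ)
    (hIαf : ∀ t : ℝ, Iαf t = (1 / Real.Gamma α) * ∫ s in (0 : ℝ)..t, (t - s) ^ (α - 1) * f s)
    (hbdd : ∃ M : ℝ, ∀ t ∈ Ioi (0 : ℝ), |Iαf t| ≤ M) :
    ¬ ∃ g : ℝ → ℝ, AlmostPeriodic g ∧ ∀ t ∈ Ioi (0 : ℝ), g t = Iαf t :=
  rl_integral_not_almost_periodic_general T hT f hf hper hne α hα Iαf hIαf
end
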